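/- arXiv:1411.7717 — 7 statements merged into one kernel-verified Lean document; each statement's English description precedes it below -/
import Mathlib

section
/- If D is a k×k real matrix such that the sum of the absolute values of its entries equals Δ, then the rank of I + D is at least k/2 - Δ/2. -/
open Matrix Finset

lemma aux_rank_submatrix_le {α : Type*} [Fintype α] [DecidableEq α] {k : ℕ}
    (A : Matrix (Fin k) (Fin k) ℝ) (f g : α → Fin k) :
    (A.submatrix f g).rank ≤ A.rank := by
  have h : A.submatrix f g =
      ((1 : Matrix (Fin k) (Fin k) ℝ).submatrix f ⇑(Equiv.refl (Fin k))) * A *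
        ((1 : Matrix (Fin k) (Fin k) ℝ).submatrix ⇑(Equiv.refl (Fin k)) g) := by
    rw [Matrix.one_submatrix_mul, Matrix.mul_submatrix_one]
    simp
  rw [h]
  exact le_trans (Matrix.rank_mul_le_left _ _) (Matrix.rank_mul_le_right _ _)

/-- If `D` is a `k × k` real matrix whose entries have absolute values summing to `Δ`,
then the rank of `I + D` is at least `k/2 - Δ/2`. -/
theorem stmt_0 {k : ℕ} (D : Matrix (Fin k) (Fin k) ℝ) (Δ : ℝ)
    (hΔ : ∑ i, ∑ j, |D i j| = Δ) :
    (k : ℝ) / 2 - Δ / 2 ≤ ((1 + D).rank : ℝ) := by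
  classical
  set S : Finset (Fin k) := Finset.univ.filter (fun i => 1 ≤ ∑ j, |D i j|) with hS
  -- |S| ≤ Δ
  have hcard : (S.card : ℝ) ≤ Δ := by
    calc (S.card : ℝ) = ∑ _i ∈ S, (1 : ℝ) := by simp
    _ ≤ ∑ i ∈ S, ∑ j, |D i j| := by
        refine Finset.sum_le_sum fun i hi => ?_
        simpa [hS] using (Finset.mem_filter.mp hi).2
    _ ≤ ∑ i, ∑ j, |D i j| := by
        refine Finset.sum_le_sum_of_subset_of_nonneg (Finset.subset_univ S) ?_
        intro i _ _
        exact Finset.sum_nonneg fun j _ => abs_nonneg _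
    _ = Δ := hΔ
  -- the principal submatrix on Sᶜ is strictly diagonally dominant, hence invertible
  set M : Matrix (↥(Sᶜ)) (↥(Sᶜ)) ℝ :=
      (1 + D).submatrix (Subtype.val) (Subtype.val) with hM
  have hdom : ∀ i : ↥(Sᶜ), ∑ j ∈ Finset.univ.erase i, ‖M i j‖ < ‖M i i‖ := by
    intro i
    have hi : (i : Fin k) ∈ Sᶜ := i.2
    have hrow : ∑ j, |D i.1 j| < 1 := by
      have := Finset.mem_compl.mp hi
      simp only [hS, Finset.mem_filter, Finset.mem_univ, true_and] at this
      linarith [not_le.mp this]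
    have hsum : ∑ j ∈ Finset.univ.erase i, ‖M i j‖
        ≤ (∑ j, |D i.1 j|) - |D i.1 i.1| := by
      have h1 : ∑ j ∈ Finset.univ.erase i, ‖M i j‖
          = ∑ j ∈ Finset.univ.erase i, |D i.1 (j : Fin k)| := by
        refine Finset.sum_congr rfl fun j hj => ?_
        have hne : (j : Fin k) ≠ (i : Fin k) := by
          intro h
          exact (Finset.mem_erase.mp hj).1 (Subtype.ext h)
        simp [hM, Matrix.one_apply, hne, Ne.symm hne, Real.norm_eq_abs]
      rw [h1]
      have h2 : ∑ j ∈ Finset.univ.erase i, |D i.1 (j : Fin k)|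
          ≤ ∑ j ∈ Finset.univ.erase i.1, |D i.1 j| := by
        rw [← Finset.sum_image (f := fun j => |D i.1 j|)
          (g := (Subtype.val : ↥(Sᶜ) → Fin k))
          (fun a _ b _ h => Subtype.ext h)]
        refine Finset.sum_le_sum_of_subset_of_nonneg ?_ (fun j _ _ => abs_nonneg _)
        intro j hj
        obtain ⟨a, ha, rfl⟩ := Finset.mem_image.mp hj
        refine Finset.mem_erase.mpr ⟨?_, Finset.mem_univ _⟩
        intro h
        exact (Finset.mem_erase.mp ha).1 (Subtype.ext h)
      have h3 : ∑ j ∈ Finset.univ.erase i.1, |D i.1 j|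
          = (∑ j, |D i.1 j|) - |D i.1 i.1| :=
        Finset.sum_erase_eq_sub (Finset.mem_univ _)
      linarith
    have hdiag : 1 - |D i.1 i.1| ≤ ‖M i i‖ := by
      have : M i i = 1 + D i.1 i.1 := by simp [hM, Matrix.one_apply]
      rw [this, Real.norm_eq_abs]
      have := abs_add_le (1 + D i.1 i.1) (-(D i.1 i.1))
      simp only [add_neg_cancel_right, abs_neg, abs_one] at this
      linarith [this]
    linarith
  have hdet : M.det ≠ 0 := det_ne_zero_of_sum_row_lt_diag hdom
  have hunit : IsUnit M := (Matrix.isUnit_iff_isUnit_det M).mpr (isUnit_iff_ne_zero.mpr hdet)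
  have hrankM : M.rank = Fintype.card ↥(Sᶜ) := Matrix.rank_of_isUnit M hunit
  have hle : M.rank ≤ (1 + D).rank := aux_rank_submatrix_le _ _ _
  have hcardc : Fintype.card ↥(Sᶜ) = k - S.card := by
    rw [Fintype.card_coe, Finset.card_compl, Fintype.card_fin]
  have hSk : S.card ≤ k := by
    simpa using Finset.card_le_card (Finset.subset_univ S)
  have hkey : (k : ℝ) - Δ ≤ ((1 + D).rank : ℝ) := by
    have h1 : ((k - S.card : ℕ) : ℝ) ≤ ((1 + D).rank : ℝ) := by
      exact_mod_cast (hcardc ▸ hrankM ▸ hle)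
    rw [Nat.cast_sub hSk] at h1
    linarith
  have h0 : (0 : ℝ) ≤ ((1 + D).rank : ℝ) := Nat.cast_nonneg _
  linarith
end

section
/- The equality function EQUAL on {0,1}ⁿ (n even), defined by EQUAL(x) = 1 if the first half of x equals the second half and 0 otherwise, cannot be written as a sum of fewer than 2^{n/2} functions each of which is a product of univariate functions of the coordinates. -/
/-!
Split the coordinates into the two halves and view a function of `x = (a, b)` as the
`2^m × 2^m` matrix indexed by `(a, b)`. EQUAL becomes the identity matrix, of rank `2^m`,
while a product of univariate functions becomes `u(a) v(b)`, a matrix of rank at most one.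
Rank is subadditive, so at least `2^m` summands are needed.
-/

namespace Matrix

variable {m n ι K : Type*} [Fintype n] [Field K]

theorem rank_add_le (A B : Matrix m n K) : (A + B).rank ≤ A.rank + B.rank := by
  rw [rank, rank, rank, mulVecLin_add]
  refine (Submodule.finrank_mono ?_).trans (Submodule.finrank_add_le_finrank_add_finrank _ _)
  rintro _ ⟨x, rfl⟩
  exact Submodule.add_mem_sup ⟨x, rfl⟩ ⟨x, rfl⟩

theorem rank_sum_le (s : Finset ι) (A : ι → Matrix m n K) :
    (∑ j ∈ s, A j).rank ≤ ∑ j ∈ s, (A j).rank :=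
  Finset.le_sum_of_subadditive (rank : Matrix m n K → ℕ) rank_zero.le rank_add_le s A

theorem card_le_of_one_eq_sum_vecMulVec [DecidableEq n] [Fintype ι] (u v : ι → n → K)
    (h : (1 : Matrix n n K) = ∑ j, vecMulVec (u j) (v j)) : Fintype.card n ≤ Fintype.card ι :=
  calc Fintype.card n = (1 : Matrix n n K).rank := rank_one.symm
    _ ≤ ∑ j, (vecMulVec (u j) (v j)).rank := h ▸ rank_sum_le _ _
    _ ≤ ∑ _j : ι, 1 := Finset.sum_le_sum fun j _ => rank_vecMulVec_le _ _
    _ = Fintype.card ι := by simp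

end Matrix

/-- The EQUAL function on `{0,1}^(2m)` (coordinates indexed by `Fin m ⊕ Fin m`, the two
summands being the two halves) cannot be written as a sum of fewer than `2^m` functions each
of which is a product of univariate functions of the coordinates. -/
theorem stmt_5 {m k : ℕ} (h : Fin k → (Fin m ⊕ Fin m) → Bool → ℝ)
    (hsum : ∀ x : Fin m ⊕ Fin m → Bool,
      (if (∀ i : Fin m, x (Sum.inl i) = x (Sum.inr i)) then (1 : ℝ) else 0) =
        ∑ j : Fin k, ∏ i, h j i (x i)) :
    2 ^ m ≤ k := by
  have equal_eq_one : (1 : Matrix (Fin m → Bool) (Fin m → Bool) ℝ) =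
      ∑ j, Matrix.vecMulVec (fun a => ∏ i, h j (Sum.inl i) (a i))
        (fun b => ∏ i, h j (Sum.inr i) (b i)) := by
    ext a b
    have hab := hsum (Sum.elim a b)
    simp only [Sum.elim_inl, Sum.elim_inr, Fintype.prod_sum_type, ← funext_iff] at hab
    simp only [Matrix.sum_apply, Matrix.vecMulVec_apply, Matrix.one_apply, hab]
  simpa using Matrix.card_le_of_one_eq_sum_vecMulVec _ _ equal_eq_one
end

section
/- Let E be a real symmetric k×k matrix. Then the sum of the absolute values of the eigenvalues of E is at most the sum of the absolute values of the entries of E. -/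
/-!
Each eigenvalue is the Rayleigh quotient `λᵢ = uᵢᴴ A uᵢ` of a unit eigenvector, so
`|λᵢ| ≤ ∑ⱼₗ |Aⱼₗ| |uᵢⱼ| |uᵢₗ|`. Summing over `i`, the weight of `|Aⱼₗ|` is
`∑ᵢ |Uⱼᵢ| |Uₗᵢ| ≤ 1` by AM-GM, since the rows of the unitary matrix `U = (uᵢ)` have unit norm.
-/

open Finset

namespace Matrix

variable {𝕜 n : Type*} [RCLike 𝕜] [Fintype n]

theorem sum_norm_sq_row_eq_one_of_mem_unitaryGroup [DecidableEq n] {U : Matrix n n 𝕜}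
    (hU : U ∈ unitaryGroup n 𝕜) (j : n) : ∑ i, ‖U j i‖ ^ 2 = 1 := by
  have hrow : (U * star U) j j = 1 := by rw [mem_unitaryGroup_iff.mp hU, one_apply_eq]
  simp only [mul_apply, star_apply, ← starRingEnd_apply, RCLike.mul_conj] at hrow
  exact_mod_cast hrow

theorem sum_norm_mul_norm_row_le_one_of_mem_unitaryGroup [DecidableEq n] {U : Matrix n n 𝕜}
    (hU : U ∈ unitaryGroup n 𝕜) (j l : n) : ∑ i, ‖U j i‖ * ‖U l i‖ ≤ 1 := by
  have hamgm : ∀ i, ‖U j i‖ * ‖U l i‖ ≤ (‖U j i‖ ^ 2 + ‖U l i‖ ^ 2) / 2 := fun i ↦ by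
    nlinarith [sq_nonneg (‖U j i‖ - ‖U l i‖)]
  calc ∑ i, ‖U j i‖ * ‖U l i‖ ≤ ∑ i, (‖U j i‖ ^ 2 + ‖U l i‖ ^ 2) / 2 :=
        sum_le_sum fun i _ ↦ hamgm i
    _ = 1 := by
      rw [← sum_div, sum_add_distrib, sum_norm_sq_row_eq_one_of_mem_unitaryGroup hU,
        sum_norm_sq_row_eq_one_of_mem_unitaryGroup hU]
      norm_num

theorem norm_star_dotProduct_mulVec_le (A : Matrix n n 𝕜) (v : n → 𝕜) :
    ‖star v ⬝ᵥ A *ᵥ v‖ ≤ ∑ j, ∑ l, ‖A j l‖ * (‖v j‖ * ‖v l‖) := by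
  calc ‖star v ⬝ᵥ A *ᵥ v‖ = ‖∑ j, ∑ l, star (v j) * (A j l * v l)‖ := by
        simp only [dotProduct, mulVec, Pi.star_apply, mul_sum]
    _ ≤ ∑ j, ∑ l, ‖star (v j) * (A j l * v l)‖ :=
        (norm_sum_le _ _).trans (sum_le_sum fun j _ ↦ norm_sum_le _ _)
    _ = ∑ j, ∑ l, ‖A j l‖ * (‖v j‖ * ‖v l‖) := by
        simp only [norm_mul, norm_star]; congr! 2; ring

theorem IsHermitian.sum_abs_eigenvalues_le [DecidableEq n] {A : Matrix n n 𝕜}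
    (hA : A.IsHermitian) : ∑ i, |hA.eigenvalues i| ≤ ∑ j, ∑ l, ‖A j l‖ := by
  set U := hA.eigenvectorUnitary
  have heig : ∀ i, |hA.eigenvalues i| ≤ ∑ j, ∑ l, ‖A j l‖ * (‖U j i‖ * ‖U l i‖) := fun i ↦ by
    rw [hA.eigenvalues_eq]
    exact (RCLike.abs_re_le_norm _).trans (norm_star_dotProduct_mulVec_le A _)
  calc ∑ i, |hA.eigenvalues i| ≤ ∑ i, ∑ j, ∑ l, ‖A j l‖ * (‖U j i‖ * ‖U l i‖) :=
        sum_le_sum fun i _ ↦ heig i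
    _ = ∑ j, ∑ l, ‖A j l‖ * ∑ i, ‖U j i‖ * ‖U l i‖ := by
        rw [sum_comm]; simp only [mul_sum]; exact sum_congr rfl fun j _ ↦ sum_comm
    _ ≤ ∑ j, ∑ l, ‖A j l‖ := sum_le_sum fun j _ ↦ sum_le_sum fun l _ ↦
        mul_le_of_le_one_right (norm_nonneg _)
          (sum_norm_mul_norm_row_le_one_of_mem_unitaryGroup U.2 j l)

end Matrix

/-- For a real symmetric `k × k` matrix, the sum of absolute values of its eigenvalues is at
most the sum of absolute values of its entries. -/
theorem stmt_7 {k : ℕ} (E : Matrix (Fin k) (Fin k) ℝ) (hE : E.IsHermitian) :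
    ∑ i, |hE.eigenvalues i| ≤ ∑ i, ∑ j, |E i j| := by
  simpa only [Real.norm_eq_abs] using hE.sum_abs_eigenvalues_le
end

section
/- Suppose {g_j} and {h_j} are sequences of real-valued functions on finite sets Y and Z respectively, and the sequence of product functions (y,z) ↦ g_j(y)·h_j(z) converges pointwise on Y × Z to a function η. Then there exist functions g : Y → ℝ and h : Z → ℝ such that η(y,z) = g(y)·h(z) for all (y,z). -/
/-- A pointwise limit of product-form functions on a finite product domain is of product form. -/
theorem stmt_9 {Y Z : Type*} [Finite Y] [Finite Z] [Nonempty Y] [Nonempty Z]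
    (g : ℕ → Y → ℝ) (h : ℕ → Z → ℝ) (η : Y → Z → ℝ)
    (hconv : ∀ y z, Filter.Tendsto (fun j => g j y * h j z) Filter.atTop (nhds (η y z))) :
    ∃ (G : Y → ℝ) (H : Z → ℝ), ∀ y z, η y z = G y * H z := by
  by_cases hz : ∀ y z, η y z = 0
  · exact ⟨fun _ => 0, fun _ => 0, fun y z => by simp [hz y z]⟩
  · push_neg at hz
    obtain ⟨y₀, z₀, h₀⟩ := hz
    have key : ∀ y z, η y z * η y₀ z₀ = η y z₀ * η y₀ z := by
      intro y z
      have t1 : Filter.Tendsto (fun j => (g j y * h j z) * (g j y₀ * h j z₀))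
          Filter.atTop (nhds (η y z * η y₀ z₀)) := (hconv y z).mul (hconv y₀ z₀)
      have t2 : Filter.Tendsto (fun j => (g j y * h j z₀) * (g j y₀ * h j z))
          Filter.atTop (nhds (η y z₀ * η y₀ z)) := (hconv y z₀).mul (hconv y₀ z)
      have : (fun j => (g j y * h j z) * (g j y₀ * h j z₀))
          = (fun j => (g j y * h j z₀) * (g j y₀ * h j z)) := by
        funext j; ring
      rw [this] at t1
      exact tendsto_nhds_unique t1 t2
    refine ⟨fun y => η y z₀, fun z => η y₀ z / η y₀ z₀, fun y z => ?_⟩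
    field_simp
    linarith [key y z]
end

section
/- Any coloring of the edges of the complete graph K_m (m ≥ 20) with colors red and blue, having r red edges where n/3 ≤ r ≤ 2n/3 and n = C(m,2), has at least m³/60 dichromatic triangles (triangles whose three edges are not all the same color). -/
open Finset
set_option maxHeartbeats 1000000
set_option linter.unreachableTactic false
set_option linter.unusedTactic false

private def srt3 {α : Type*} [LinearOrder α] (p : α × α × α) : α × α × α :=
  if p.1 ≤ p.2.1 then
    if p.2.1 ≤ p.2.2 then p
    else if p.1 ≤ p.2.2 then (p.1, p.2.2, p.2.1) else (p.2.2, p.1, p.2.1)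
  else
    if p.1 ≤ p.2.2 then (p.2.1, p.1, p.2.2)
    else if p.2.1 ≤ p.2.2 then (p.2.1, p.2.2, p.1) else (p.2.2, p.2.1, p.1)

private lemma srt3_perm {α : Type*} [LinearOrder α] {a b c i j k : α}
    (h : srt3 (a, b, c) = (i, j, k)) :
    (a = i ∧ b = j ∧ c = k) ∨ (a = i ∧ b = k ∧ c = j) ∨ (a = j ∧ b = i ∧ c = k) ∨
    (a = j ∧ b = k ∧ c = i) ∨ (a = k ∧ b = i ∧ c = j) ∨ (a = k ∧ b = j ∧ c = i) := by
  unfold srt3 at h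
  split_ifs at h <;> simp_all [Prod.ext_iff] <;> tauto

private lemma srt3_sorted {α : Type*} [LinearOrder α] {a b c : α}
    (hab : a ≠ b) (hac : a ≠ c) (hbc : b ≠ c) :
    (srt3 (a,b,c)).1 < (srt3 (a,b,c)).2.1 ∧ (srt3 (a,b,c)).2.1 < (srt3 (a,b,c)).2.2 := by
  unfold srt3
  split_ifs with h1 h2 h3 h4 h5 <;> simp only <;>
    refine ⟨?_, ?_⟩ <;>
    first
      | exact lt_of_le_of_ne ‹_› ‹_›
      | exact lt_of_le_of_ne ‹_› (Ne.symm ‹_›)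
      | exact lt_of_not_ge ‹_›

section
variable {m : ℕ} (c : Fin m → Fin m → Bool)

private lemma cherry_le_two_dich (hsym : ∀ i j, c i j = c j i) :
    ((univ : Finset (Fin m × Fin m × Fin m)).filter fun t =>
        t.1 ≠ t.2.1 ∧ t.1 ≠ t.2.2 ∧ c t.1 t.2.1 = true ∧ c t.1 t.2.2 = false).card
    ≤ 2 * ((univ : Finset (Fin m × Fin m × Fin m)).filter fun t =>
        t.1 < t.2.1 ∧ t.2.1 < t.2.2 ∧
          ¬(c t.1 t.2.1 = c t.2.1 t.2.2 ∧ c t.1 t.2.2 = c t.2.1 t.2.2)).card := by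
  classical
  set S := (univ : Finset (Fin m × Fin m × Fin m)).filter fun t =>
      t.1 ≠ t.2.1 ∧ t.1 ≠ t.2.2 ∧ c t.1 t.2.1 = true ∧ c t.1 t.2.2 = false with hS
  set T := (univ : Finset (Fin m × Fin m × Fin m)).filter fun t =>
      t.1 < t.2.1 ∧ t.2.1 < t.2.2 with hT
  have hmap : ∀ s ∈ S, srt3 s ∈ T := by
    intro s hs
    simp only [hS, mem_filter, mem_univ, true_and] at hs
    obtain ⟨h1, h2, h3, h4⟩ := hs
    have hbc : s.2.1 ≠ s.2.2 := by
      intro h; rw [h] at h3; simp [h3] at h4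
    have := srt3_sorted h1 h2 hbc
    simp only [hT, mem_filter, mem_univ, true_and]
    exact this
  have hfib : S.card = ∑ t ∈ T, (S.filter fun s => srt3 s = t).card :=
    card_eq_sum_card_fiberwise hmap
  have hbound : ∀ t ∈ T, (S.filter fun s => srt3 s = t).card ≤
      (if ¬(c t.1 t.2.1 = c t.2.1 t.2.2 ∧ c t.1 t.2.2 = c t.2.1 t.2.2) then 2 else 0) := by
    rintro ⟨i, j, k⟩ ht
    simp only [hT, mem_filter, mem_univ, true_and] at ht
    obtain ⟨hij, hjk⟩ := ht
    have hik : i < k := hij.trans hjk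
    have hji : c j i = c i j := hsym j i
    have hki : c k i = c i k := hsym k i
    have hkj : c k j = c j k := hsym k j
    have hsub : S.filter (fun s => srt3 s = (i, j, k)) ⊆
        ({(i,j,k),(i,k,j),(j,i,k),(j,k,i),(k,i,j),(k,j,i)} :
            Finset (Fin m × Fin m × Fin m)).filter
          (fun s => c s.1 s.2.1 = true ∧ c s.1 s.2.2 = false) := by
      rintro ⟨a, b, d⟩ hs
      simp only [hS, mem_filter, mem_univ, true_and] at hs
      obtain ⟨⟨h1, h2, h3, h4⟩, hsort⟩ := hs
      have hperm := srt3_perm hsort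
      simp only [mem_filter, mem_insert, mem_singleton, Prod.mk.injEq]
      refine ⟨?_, h3, h4⟩
      tauto
    refine le_trans (card_le_card hsub) ?_
    have hij' : i ≠ j := ne_of_lt hij
    have hjk' : j ≠ k := ne_of_lt hjk
    have hik' : i ≠ k := ne_of_lt hik
    rcases hxx : c i j <;> rcases hyy : c j k <;> rcases hzz : c i k <;>
      simp [filter_insert, filter_singleton, hji, hki, hkj, hxx, hyy, hzz, hij', hjk', hik',
        Ne.symm hij', Ne.symm hjk', Ne.symm hik'] <;>
      first
        | exact le_trans (card_insert_le _ _) (by simp)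
        | simp
  calc S.card = ∑ t ∈ T, (S.filter fun s => srt3 s = t).card := hfib
    _ ≤ ∑ t ∈ T, (if ¬(c t.1 t.2.1 = c t.2.1 t.2.2 ∧ c t.1 t.2.2 = c t.2.1 t.2.2)
          then 2 else 0) := sum_le_sum hbound
    _ = 2 * (T.filter fun t =>
          ¬(c t.1 t.2.1 = c t.2.1 t.2.2 ∧ c t.1 t.2.2 = c t.2.1 t.2.2)).card := by
        rw [← sum_filter, sum_const, smul_eq_mul, mul_comm]
    _ = 2 * ((univ : Finset (Fin m × Fin m × Fin m)).filter fun t =>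
          t.1 < t.2.1 ∧ t.2.1 < t.2.2 ∧
            ¬(c t.1 t.2.1 = c t.2.1 t.2.2 ∧ c t.1 t.2.2 = c t.2.1 t.2.2)).card := by
        rw [hT, filter_filter]
        congr 2
        ext t
        simp [and_assoc]
end

private lemma card_lt_pairs (m : ℕ) :
    ((univ : Finset (Fin m × Fin m)).filter fun p => p.1 < p.2).card = m.choose 2 := by
  have h : ((univ : Finset (Fin m × Fin m)).filter fun p => p.1 < p.2).card
      = ∑ j : Fin m, (((univ : Finset (Fin m × Fin m)).filter fun p => p.1 < p.2).filter
          fun p => p.2 = j).card :=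
    card_eq_sum_card_fiberwise (fun x _ => mem_univ _)
  have h2 : ∀ j : Fin m, (((univ : Finset (Fin m × Fin m)).filter fun p => p.1 < p.2).filter
      fun p => p.2 = j).card = (j : ℕ) := by
    intro j
    rw [← Fin.card_Iio (b := j)]
    apply card_bij (fun p _ => p.1)
    · intro p hp
      simp only [mem_filter, mem_univ, true_and] at hp
      simp [mem_Iio, hp.2 ▸ hp.1]
    · intro p hp q hq hpq
      simp only [mem_filter, mem_univ, true_and] at hp hq
      exact Prod.ext hpq (hp.2.trans hq.2.symm)
    · intro i hi
      simp only [mem_Iio] at hi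
      exact ⟨(i, j), by simp [hi], rfl⟩
  rw [h]
  simp only [h2]
  rw [Fin.sum_univ_eq_sum_range (fun k => k)]
  have := Finset.sum_range_id_mul_two m
  have h3 := Nat.choose_two_right m
  omega

section
variable {m : ℕ} (c : Fin m → Fin m → Bool)

private lemma split_count :
    ((univ : Finset (Fin m × Fin m)).filter fun p => p.1 < p.2 ∧ c p.1 p.2 = true).card
    + ((univ : Finset (Fin m × Fin m)).filter fun p => p.1 < p.2 ∧ c p.1 p.2 = false).card
    = ((univ : Finset (Fin m × Fin m)).filter fun p => p.1 < p.2).card := by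
  have e1 : ((univ : Finset (Fin m × Fin m)).filter fun p => p.1 < p.2 ∧ c p.1 p.2 = true)
      = ((univ : Finset (Fin m × Fin m)).filter fun p => p.1 < p.2).filter
        (fun p => c p.1 p.2 = true) := by
    rw [filter_filter]
  have e2 : ((univ : Finset (Fin m × Fin m)).filter fun p => p.1 < p.2 ∧ c p.1 p.2 = false)
      = ((univ : Finset (Fin m × Fin m)).filter fun p => p.1 < p.2).filter
        (fun p => ¬ (c p.1 p.2 = true)) := by
    rw [filter_filter]
    simp [Bool.not_eq_true]
  rw [e1, e2, card_filter_add_card_filter_not]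

private lemma double_count (hsym : ∀ i j, c i j = c j i) (v : Bool) :
    ((univ : Finset (Fin m × Fin m)).filter fun p => p.1 ≠ p.2 ∧ c p.1 p.2 = v).card
    = 2 * ((univ : Finset (Fin m × Fin m)).filter fun p => p.1 < p.2 ∧ c p.1 p.2 = v).card := by
  set A := (univ : Finset (Fin m × Fin m)).filter fun p => p.1 ≠ p.2 ∧ c p.1 p.2 = v with hA
  have h1 : (A.filter fun p => p.1 < p.2).card
      + (A.filter fun p => ¬ (p.1 < p.2)).card = A.card :=
    card_filter_add_card_filter_not _
  have e1 : A.filter (fun p => p.1 < p.2)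
      = (univ : Finset (Fin m × Fin m)).filter fun p => p.1 < p.2 ∧ c p.1 p.2 = v := by
    ext p
    simp only [hA, mem_filter, mem_univ, true_and, and_assoc]
    constructor
    · rintro ⟨_, h2, h3⟩; exact ⟨h3, h2⟩
    · rintro ⟨h3, h2⟩; exact ⟨ne_of_lt h3, h2, h3⟩
  have e2 : (A.filter fun p => ¬ (p.1 < p.2)).card
      = ((univ : Finset (Fin m × Fin m)).filter fun p => p.1 < p.2 ∧ c p.1 p.2 = v).card := by
    apply card_bij (fun p _ => Prod.swap p)
    · intro p hp
      simp only [hA, mem_filter, mem_univ, true_and] at hp ⊢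
      obtain ⟨⟨hne, hc⟩, hnlt⟩ := hp
      exact ⟨lt_of_le_of_ne (not_lt.mp hnlt) (Ne.symm hne), (hsym p.2 p.1).trans hc⟩
    · intro p _ q _ hpq
      exact Prod.swap_injective hpq
    · intro p hp
      simp only [mem_filter, mem_univ, true_and] at hp
      refine ⟨Prod.swap p, ?_, by simp⟩
      simp only [hA, mem_filter, mem_univ, true_and, Prod.fst_swap, Prod.snd_swap]
      exact ⟨⟨ne_of_gt hp.1, (hsym p.2 p.1).trans hp.2⟩, not_lt.mpr (le_of_lt hp.1)⟩
  rw [e1] at h1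
  omega
end

section
variable {m : ℕ} (c : Fin m → Fin m → Bool)

private lemma card4le {β : Type*} [DecidableEq β] (a b d e : β) :
    ({a, b, d, e} : Finset β).card ≤ 4 := by
  apply le_trans (card_insert_le _ _)
  apply Nat.succ_le_succ
  apply le_trans (card_insert_le _ _)
  apply Nat.succ_le_succ
  apply le_trans (card_insert_le _ _)
  apply Nat.succ_le_succ
  simp

private lemma qs_le (hsym : ∀ i j, c i j = c j i) :
    ((((univ : Finset (Fin m × Fin m)).filter fun p => p.1 ≠ p.2 ∧ c p.1 p.2 = true) ×ˢ
      ((univ : Finset (Fin m × Fin m)).filter fun p => p.1 ≠ p.2 ∧ c p.1 p.2 = false)).filter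
        fun q => q.1.1 = q.2.1 ∨ q.1.1 = q.2.2 ∨ q.1.2 = q.2.1 ∨ q.1.2 = q.2.2).card
    ≤ 4 * ((univ : Finset (Fin m × Fin m × Fin m)).filter fun t =>
        t.1 ≠ t.2.1 ∧ t.1 ≠ t.2.2 ∧ c t.1 t.2.1 = true ∧ c t.1 t.2.2 = false).card := by
  classical
  set S := (univ : Finset (Fin m × Fin m × Fin m)).filter fun t =>
      t.1 ≠ t.2.1 ∧ t.1 ≠ t.2.2 ∧ c t.1 t.2.1 = true ∧ c t.1 t.2.2 = false with hS
  set Qs := (((univ : Finset (Fin m × Fin m)).filter fun p => p.1 ≠ p.2 ∧ c p.1 p.2 = true) ×ˢ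
      ((univ : Finset (Fin m × Fin m)).filter fun p => p.1 ≠ p.2 ∧ c p.1 p.2 = false)).filter
        (fun q => q.1.1 = q.2.1 ∨ q.1.1 = q.2.2 ∨ q.1.2 = q.2.1 ∨ q.1.2 = q.2.2) with hQs
  set ψ : (Fin m × Fin m) × (Fin m × Fin m) → Fin m × Fin m × Fin m := fun q =>
    if q.1.1 = q.2.1 then (q.1.1, q.1.2, q.2.2)
    else if q.1.1 = q.2.2 then (q.1.1, q.1.2, q.2.1)
    else if q.1.2 = q.2.1 then (q.1.2, q.1.1, q.2.2)
    else (q.1.2, q.1.1, q.2.1) with hψ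
  apply card_le_mul_card_image_of_maps_to (f := ψ) (t := S)
  · rintro ⟨⟨u, v⟩, ⟨x, y⟩⟩ hq
    simp only [hQs, mem_filter, mem_product, mem_univ, true_and] at hq
    obtain ⟨⟨⟨huv, hcuv⟩, ⟨hxy, hcxy⟩⟩, hshare⟩ := hq
    simp only [hψ, hS, mem_filter, mem_univ, true_and]
    split_ifs with h1 h2 h3
    · subst h1
      exact ⟨huv, hxy, hcuv, hcxy⟩
    · subst h2
      exact ⟨huv, Ne.symm hxy, hcuv, (hsym u x).trans hcxy⟩
    · subst h3
      exact ⟨Ne.symm huv, hxy, (hsym v u).trans hcuv, hcxy⟩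
    · have h4 : v = y := by tauto
      subst h4
      exact ⟨Ne.symm huv, fun hh => h3 hh, (hsym v u).trans hcuv, (hsym v x).trans hcxy⟩
  · rintro ⟨w1, w2, w3⟩ hw
    have hsub : Qs.filter (fun q => ψ q = (w1, w2, w3)) ⊆
        ({((w1,w2),(w1,w3)), ((w1,w2),(w3,w1)), ((w2,w1),(w1,w3)), ((w2,w1),(w3,w1))} :
          Finset ((Fin m × Fin m) × (Fin m × Fin m))) := by
      rintro ⟨⟨u, v⟩, ⟨x, y⟩⟩ hq
      simp only [mem_filter] at hq
      obtain ⟨hqs, hφ⟩ := hq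
      simp only [hQs, mem_filter, mem_product, mem_univ, true_and] at hqs
      obtain ⟨⟨⟨huv, hcuv⟩, ⟨hxy, hcxy⟩⟩, hshare⟩ := hqs
      simp only [hψ] at hφ
      simp only [mem_insert, mem_singleton, Prod.mk.injEq]
      split_ifs at hφ with h1 h2 h3 <;>
        simp only [Prod.mk.injEq] at hφ <;>
        obtain ⟨e1, e2, e3⟩ := hφ
      · subst h1 e1 e2 e3; tauto
      · subst h2 e1 e2 e3; tauto
      · subst h3 e1 e2 e3; tauto
      · have h4 : v = y := by tauto
        subst h4 e1 e2 e3; tauto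
    exact le_trans (card_le_card hsub) (card4le _ _ _ _)
end

section
variable {m : ℕ} (c : Fin m → Fin m → Bool)

private lemma qd_le (hsym : ∀ i j, c i j = c j i) :
    ((((univ : Finset (Fin m × Fin m)).filter fun p => p.1 ≠ p.2 ∧ c p.1 p.2 = true) ×ˢ
      ((univ : Finset (Fin m × Fin m)).filter fun p => p.1 ≠ p.2 ∧ c p.1 p.2 = false)).filter
        fun q => ¬(q.1.1 = q.2.1 ∨ q.1.1 = q.2.2 ∨ q.1.2 = q.2.1 ∨ q.1.2 = q.2.2)).card
    ≤ (2 * m) * ((univ : Finset (Fin m × Fin m × Fin m)).filter fun t =>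
        t.1 ≠ t.2.1 ∧ t.1 ≠ t.2.2 ∧ c t.1 t.2.1 = true ∧ c t.1 t.2.2 = false).card := by
  classical
  set S := (univ : Finset (Fin m × Fin m × Fin m)).filter fun t =>
      t.1 ≠ t.2.1 ∧ t.1 ≠ t.2.2 ∧ c t.1 t.2.1 = true ∧ c t.1 t.2.2 = false with hS
  set Qd := (((univ : Finset (Fin m × Fin m)).filter fun p => p.1 ≠ p.2 ∧ c p.1 p.2 = true) ×ˢ
      ((univ : Finset (Fin m × Fin m)).filter fun p => p.1 ≠ p.2 ∧ c p.1 p.2 = false)).filter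
        (fun q => ¬(q.1.1 = q.2.1 ∨ q.1.1 = q.2.2 ∨ q.1.2 = q.2.1 ∨ q.1.2 = q.2.2)) with hQd
  set φ : (Fin m × Fin m) × (Fin m × Fin m) → Fin m × Fin m × Fin m := fun q =>
    if c q.1.1 q.2.1 = true then (q.2.1, q.1.1, q.2.2) else (q.1.1, q.1.2, q.2.1) with hφ
  apply card_le_mul_card_image_of_maps_to (f := φ) (t := S)
  · rintro ⟨⟨u, v⟩, ⟨x, y⟩⟩ hq
    simp only [hQd, mem_filter, mem_product, mem_univ, true_and, not_or] at hq
    obtain ⟨⟨⟨huv, hcuv⟩, ⟨hxy, hcxy⟩⟩, hux, huy, hvx, hvy⟩ := hq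
    simp only [hφ, hS, mem_filter, mem_univ, true_and]
    split_ifs with h1
    · exact ⟨fun hh => hux hh.symm, hxy, (hsym x u).trans h1, hcxy⟩
    · exact ⟨huv, hux, hcuv, Bool.not_eq_true _ ▸ h1⟩
  · rintro ⟨w1, w2, w3⟩ hw
    apply le_trans (card_le_card_of_injOn
      (f := fun q => ((if c q.1.1 q.2.1 = true then q.1.2 else q.2.2, c q.1.1 q.2.1) :
          Fin m × Bool))
      (t := (univ : Finset (Fin m × Bool))) (fun q _ => mem_univ _) ?_) ?_
    · rintro ⟨⟨u, v⟩, ⟨x, y⟩⟩ hq ⟨⟨u', v'⟩, ⟨x', y'⟩⟩ hq' hg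
      simp only [mem_coe, mem_filter] at hq hq'
      obtain ⟨-, hφ1⟩ := hq
      obtain ⟨-, hφ2⟩ := hq'
      simp only [hφ] at hφ1 hφ2
      simp only [Prod.mk.injEq] at hg
      obtain ⟨hg1, hg2⟩ := hg
      by_cases hb : c u x = true
      · have hb' : c u' x' = true := by rw [← hg2]; exact hb
        rw [if_pos hb] at hφ1 hg1
        rw [if_pos hb'] at hφ2 hg1
        simp only [Prod.mk.injEq] at hφ1 hφ2
        obtain ⟨a1, a2, a3⟩ := hφ1
        obtain ⟨b1, b2, b3⟩ := hφ2
        simp [Prod.ext_iff, a1, a2, a3, b1, b2, b3, hg1]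
      · have hb' : ¬ c u' x' = true := by rw [← hg2]; exact hb
        rw [if_neg hb] at hφ1 hg1
        rw [if_neg hb'] at hφ2 hg1
        simp only [Prod.mk.injEq] at hφ1 hφ2
        obtain ⟨a1, a2, a3⟩ := hφ1
        obtain ⟨b1, b2, b3⟩ := hφ2
        simp [Prod.ext_iff, a1, a2, a3, b1, b2, b3, hg1]
    · simp [card_univ, mul_comm]
end

/-- Any red/blue edge-coloring of `K_m` (`m ≥ 20`) with `r` red edges, where
`n/3 ≤ r ≤ 2n/3` and `n = C(m,2)`, has at least `m³/60` dichromatic triangles. -/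
theorem stmt_10 {m : ℕ} (hm : 20 ≤ m) (c : Fin m → Fin m → Bool)
    (hsym : ∀ i j, c i j = c j i)
    (hr1 : ((m.choose 2 : ℕ) : ℝ) / 3 ≤
      ((Finset.univ.filter (fun p : Fin m × Fin m => p.1 < p.2 ∧ c p.1 p.2 = true)).card : ℝ))
    (hr2 : ((Finset.univ.filter (fun p : Fin m × Fin m => p.1 < p.2 ∧ c p.1 p.2 = true)).card : ℝ)
      ≤ 2 * ((m.choose 2 : ℕ) : ℝ) / 3) :
    (m : ℝ) ^ 3 / 60 ≤
      ((Finset.univ.filter (fun t : Fin m × Fin m × Fin m =>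
        t.1 < t.2.1 ∧ t.2.1 < t.2.2 ∧
          ¬(c t.1 t.2.1 = c t.2.1 t.2.2 ∧ c t.1 t.2.2 = c t.2.1 t.2.2))).card : ℝ) := by
  classical
  set r := ((univ : Finset (Fin m × Fin m)).filter
      fun p => p.1 < p.2 ∧ c p.1 p.2 = true).card with hr
  set b := ((univ : Finset (Fin m × Fin m)).filter
      fun p => p.1 < p.2 ∧ c p.1 p.2 = false).card with hb
  set D := ((univ : Finset (Fin m × Fin m × Fin m)).filter fun t =>
      t.1 < t.2.1 ∧ t.2.1 < t.2.2 ∧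
        ¬(c t.1 t.2.1 = c t.2.1 t.2.2 ∧ c t.1 t.2.2 = c t.2.1 t.2.2)).card with hD
  set S := ((univ : Finset (Fin m × Fin m × Fin m)).filter fun t =>
      t.1 ≠ t.2.1 ∧ t.1 ≠ t.2.2 ∧ c t.1 t.2.1 = true ∧ c t.1 t.2.2 = false).card with hS
  have hrb : r + b = m.choose 2 := by
    rw [hr, hb, split_count c, card_lt_pairs m]
  have hRc := double_count c hsym true
  have hBc := double_count c hsym false
  have hprod : ((((univ : Finset (Fin m × Fin m)).filter
        fun p => p.1 ≠ p.2 ∧ c p.1 p.2 = true) ×ˢ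
      ((univ : Finset (Fin m × Fin m)).filter
        fun p => p.1 ≠ p.2 ∧ c p.1 p.2 = false)).card) = (2 * r) * (2 * b) := by
    rw [card_product, hRc, hBc]
  have hsplitQ := card_filter_add_card_filter_not
    (s := (((univ : Finset (Fin m × Fin m)).filter fun p => p.1 ≠ p.2 ∧ c p.1 p.2 = true) ×ˢ
      ((univ : Finset (Fin m × Fin m)).filter fun p => p.1 ≠ p.2 ∧ c p.1 p.2 = false)))
    (p := fun q => q.1.1 = q.2.1 ∨ q.1.1 = q.2.2 ∨ q.1.2 = q.2.1 ∨ q.1.2 = q.2.2)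
  have h1 := qs_le c hsym
  have h2 := qd_le c hsym
  have h3 := cherry_le_two_dich c hsym
  have hkey : 4 * (r * b) ≤ (8 + 4 * m) * D := by
    rw [← hS] at h1 h2
    rw [← hS, ← hD] at h3
    nlinarith [h1, h2, h3, hsplitQ, hprod]
  -- now real arithmetic
  have hkeyR : 4 * ((r : ℝ) * b) ≤ (8 + 4 * (m : ℝ)) * D := by
    have := (Nat.cast_le (α := ℝ)).mpr hkey
    push_cast at this
    linarith
  have hnR : (r : ℝ) + b = (m.choose 2 : ℕ) := by
    exact_mod_cast congrArg (Nat.cast (R := ℝ)) hrb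
  have hchoose : ((m.choose 2 : ℕ) : ℝ) = m * ((m : ℝ) - 1) / 2 := by
    rw [Nat.cast_choose_two]
  have hm20 : (20 : ℝ) ≤ (m : ℝ) := by exact_mod_cast hm
  have hDnn : (0 : ℝ) ≤ D := Nat.cast_nonneg _
  set n : ℝ := ((m.choose 2 : ℕ) : ℝ) with hn
  have h5 : (0:ℝ) ≤ ((r : ℝ) - n/3) * (2*n/3 - (r : ℝ)) :=
    mul_nonneg (by linarith) (by linarith)
  have h6 : 2*n^2/9 ≤ (r:ℝ) * b := by nlinarith [h5, hnR]
  have h7 : (0:ℝ) ≤ 7*(m:ℝ)^2 - 26*m + 10 := by nlinarith [hm20]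
  nlinarith [hkeyR, h6, hchoose, hm20, hDnn,
    mul_nonneg (sq_nonneg (m:ℝ)) h7]
end

section
/- Let a, b, c be edges forming a triangle in K_m, with a and b belonging to one part of an edge bipartition (y-edges) and c to the other (z-edges). Suppose g and h are nonnegative real-valued functions of the y-edge indicators and z-edge indicators respectively, such that g(y)h(z) = 0 whenever the graph encoded by x is not a spanning tree. Then either g(y)h(z) = 0 for all x whose graph contains both a and b, or g(y)h(z) = 0 for all x whose graph contains c. -/
/-- Edges of the complete graph `K_m`: ordered pairs of vertices. -/
abbrev KmEdge (m : ℕ) := {p : Fin m × Fin m // p.1 < p.2}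

/-- The subgraph of `K_m` encoded by the edge-indicator vector `x`. -/
def graphOf {m : ℕ} (x : KmEdge m → Bool) : SimpleGraph (Fin m) :=
  SimpleGraph.fromRel (fun u v => ∃ h : u < v, x ⟨(u, v), h⟩ = true)

/-- `e` has endpoints `u` and `v`. -/
def hasEnds {m : ℕ} (e : KmEdge m) (u v : Fin m) : Prop :=
  (e.1.1 = u ∧ e.1.2 = v) ∨ (e.1.1 = v ∧ e.1.2 = u)

lemma adj_of_edge {m : ℕ} (x : KmEdge m → Bool) (e : KmEdge m) (u v : Fin m)
    (he : hasEnds e u v) (huv : u ≠ v) (hx : x e = true) : (graphOf x).Adj u v := by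
  rcases he with ⟨h1, h2⟩ | ⟨h1, h2⟩
  · have hlt : u < v := by rw [← h1, ← h2]; exact e.2
    have : e = ⟨(u, v), hlt⟩ := Subtype.ext (Prod.ext h1 h2)
    exact ⟨huv, Or.inl ⟨hlt, this ▸ hx⟩⟩
  · have hlt : v < u := by rw [← h1, ← h2]; exact e.2
    have : e = ⟨(v, u), hlt⟩ := Subtype.ext (Prod.ext h1 h2)
    exact ⟨huv, Or.inr ⟨hlt, this ▸ hx⟩⟩

lemma not_tree_of_triangle {m : ℕ} (G : SimpleGraph (Fin m)) (u v w : Fin m)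
    (huv : u ≠ v) (hvw : v ≠ w) (huw : u ≠ w)
    (h1 : G.Adj u v) (h2 : G.Adj v w) (h3 : G.Adj u w) : ¬ G.IsTree := by
  intro ht
  have hac := ht.IsAcyclic
  apply hac (.cons h1 (.cons h2 (.cons h3.symm .nil)))
  rw [SimpleGraph.Walk.isCycle_def]
  refine ⟨⟨?_⟩, by simp, ?_⟩
  · simp only [SimpleGraph.Walk.edges_cons, SimpleGraph.Walk.edges_nil, List.nodup_cons,
      List.mem_cons, List.not_mem_nil, or_false, List.nodup_nil, and_true, not_or, Sym2.eq_iff]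
    have h4 := Ne.symm huv; have h5 := Ne.symm hvw; have h6 := Ne.symm huw
    refine ⟨⟨?_, ?_⟩, ?_⟩ <;> tauto
  · simp [huv, hvw, huw, Ne.symm hvw, Ne.symm huv, Ne.symm huw]

/-- Let `a, b, c` be edges forming a triangle in `K_m`, with `a` and `b` red (`y`-edges) and
`c` blue (`z`-edge).  If `g` depends only on the red-edge indicators, `h` only on the blue-edge
indicators, both are nonnegative, and `g·h` vanishes whenever the encoded graph is not a
spanning tree, then either `g·h` vanishes on all `x` whose graph contains both `a` and `b`, or
`g·h` vanishes on all `x` whose graph contains `c`. -/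
theorem stmt_13 {m : ℕ} (red : KmEdge m → Bool) (a b c : KmEdge m)
    (htri : ∃ u v w : Fin m, u ≠ v ∧ v ≠ w ∧ u ≠ w ∧
      hasEnds a u v ∧ hasEnds b v w ∧ hasEnds c u w)
    (ha : red a = true) (hb : red b = true) (hc : red c = false)
    (g h : (KmEdge m → Bool) → ℝ)
    (hg0 : ∀ x, 0 ≤ g x) (hh0 : ∀ x, 0 ≤ h x)
    (hgdep : ∀ x x', (∀ e, red e = true → x e = x' e) → g x = g x')
    (hhdep : ∀ x x', (∀ e, red e = false → x e = x' e) → h x = h x')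
    (hzero : ∀ x, ¬ (graphOf x).IsTree → g x * h x = 0) :
    (∀ x : KmEdge m → Bool, x a = true → x b = true → g x * h x = 0) ∨
    (∀ x : KmEdge m → Bool, x c = true → g x * h x = 0) := by
  by_contra hcon
  push_neg at hcon
  obtain ⟨⟨x1, hx1a, hx1b, hne1⟩, ⟨x2, hx2c, hne2⟩⟩ := hcon
  set x : KmEdge m → Bool := fun e => if red e then x1 e else x2 e with hxdef
  have hgx : g x = g x1 := hgdep x x1 (fun e he => by simp [hxdef, he])
  have hhx : h x = h x2 := hhdep x x2 (fun e he => by simp [hxdef, he])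
  have hxa : x a = true := by simp [hxdef, ha, hx1a]
  have hxb : x b = true := by simp [hxdef, hb, hx1b]
  have hxc : x c = true := by simp [hxdef, hc, hx2c]
  obtain ⟨u, v, w, huv, hvw, huw, hea, heb, hec⟩ := htri
  have hz := hzero x (not_tree_of_triangle _ u v w huv hvw huw
    (adj_of_edge x a u v hea huv hxa) (adj_of_edge x b v w heb hvw hxb)
    (adj_of_edge x c u w hec huw hxc))
  rw [hgx, hhx] at hz
  rcases mul_eq_zero.mp hz with h0 | h0
  · exact hne1 (by rw [h0, zero_mul])
  · exact hne2 (by rw [h0, mul_zero])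
end

section
/- Any function F : {0,1}ⁿ → ℝ that is a pointwise limit of functions each expressible as a sum of at most k products g_i·h_i of nonnegative functions on complementary variable subsets (with each subset of size between n/3 and 2n/3, subsets allowed to vary along the sequence) is itself expressible as a sum of at most k such products of nonnegative functions on complementary subsets of sizes between n/3 and 2n/3. -/
/-- `F` is expressible as a sum of at most `k` products `g_i·h_i` of nonnegative functions on
complementary coordinate subsets, each subset of size between `n/3` and `2n/3`. -/
def HasGoodDecomp (n k : ℕ) (F : (Fin n → Bool) → ℝ) : Prop :=
  ∃ k' : ℕ, k' ≤ k ∧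
    ∃ (A : Fin k' → Finset (Fin n)) (g h : Fin k' → (Fin n → Bool) → ℝ),
      (∀ i, (n : ℝ) / 3 ≤ ((A i).card : ℝ) ∧ ((A i).card : ℝ) ≤ 2 * (n : ℝ) / 3) ∧
      (∀ i, (n : ℝ) / 3 ≤ (((A i)ᶜ).card : ℝ) ∧ (((A i)ᶜ).card : ℝ) ≤ 2 * (n : ℝ) / 3) ∧
      (∀ i x, 0 ≤ g i x) ∧ (∀ i x, 0 ≤ h i x) ∧
      (∀ i x x', (∀ t ∈ A i, x t = x' t) → g i x = g i x') ∧
      (∀ i x x', (∀ t ∉ A i, x t = x' t) → h i x = h i x') ∧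
      (∀ x, F x = ∑ i : Fin k', g i x * h i x)

/-! A nonnegative `p` factors as `g(x|_A) · h(x|_Aᶜ)` with nonnegative factors exactly when
`IsSplitRankOne A p`, a closed condition under pointwise convergence. The summands of a sum of
nonnegative functions are bounded by the sum, so along a convergent sequence of sums with fixed
subsets a subsequence of the summands converges (Tychonoff), and the limit is again such a sum.
As there are only finitely many choices of the number of summands and of the subsets, the
functions admitting a decomposition form a finite union of closed sets. -/

open Filter Topology Function
open scoped Pointwise

section SplitRankOne

variable {ι β R : Type*} [DecidableEq ι]

/-- Viewing `p` as a matrix whose rows are indexed by `x|_A` and columns by `x|_Aᶜ`,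
all its `2 × 2` minors vanish. -/
def IsSplitRankOne [Mul R] (A : Finset ι) (p : (ι → β) → R) : Prop :=
  ∀ x y, p x * p y = p (A.piecewise x y) * p (A.piecewise y x)

theorem isSplitRankOne_mul [CommMonoid R] {A : Finset ι} {g h : (ι → β) → R}
    (hg : DependsOn g A) (hh : DependsOn h (↑A)ᶜ) : IsSplitRankOne A (g * h) := by
  have hgA : ∀ x y, g (A.piecewise x y) = g x := fun x y =>
    hg fun t ht => A.piecewise_eq_of_mem x y ht
  have hhA : ∀ x y, h (A.piecewise x y) = h y := fun x y =>
    hh fun t ht => A.piecewise_eq_of_notMem x y ht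
  intro x y
  simp only [Pi.mul_apply, hgA, hhA]
  ac_rfl

theorem IsSplitRankOne.exists_dependsOn_mul [Field R] [LinearOrder R] [IsStrictOrderedRing R]
    {A : Finset ι} {p : (ι → β) → R} (hp : IsSplitRankOne A p) (hp0 : 0 ≤ p) :
    ∃ g h : (ι → β) → R, 0 ≤ g ∧ 0 ≤ h ∧ DependsOn g A ∧ DependsOn h (↑A)ᶜ ∧ p = g * h := by
  by_cases hzero : p = 0
  · exact ⟨0, 0, le_rfl, le_rfl, fun _ _ _ => rfl, fun _ _ _ => rfl, by simp [hzero]⟩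
  obtain ⟨x₀, hx₀⟩ : ∃ x₀, p x₀ ≠ 0 := by simpa [funext_iff] using hzero
  have hpos : 0 < p x₀ := (hp0 x₀).lt_of_ne' hx₀
  -- Row `x|_A` and column `x|_Aᶜ` through the nonzero entry `p x₀` give the two factors.
  refine ⟨fun x => p (A.piecewise x x₀), fun x => p (A.piecewise x₀ x) / p x₀,
    fun x => hp0 (A.piecewise x x₀), fun x => div_nonneg (hp0 _) hpos.le, ?_, ?_, ?_⟩
  · exact fun x y hxy => congrArg p (A.piecewise_congr hxy fun _ _ => rfl)
  · exact fun x y hxy => congrArg (· / p x₀) (congrArg p (A.piecewise_congr (fun _ _ => rfl) hxy))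
  · ext x
    rw [Pi.mul_apply, mul_div_assoc', ← hp x x₀, mul_div_cancel_right₀ _ hx₀]

theorem isClosed_setOf_isSplitRankOne [TopologicalSpace R] [T2Space R] [Mul R] [ContinuousMul R]
    (A : Finset ι) : IsClosed {p : (ι → β) → R | IsSplitRankOne A p} := by
  simp only [IsSplitRankOne, Set.ofPred_forall]
  exact isClosed_iInter fun x => isClosed_iInter fun y => isClosed_eq
    ((continuous_apply x).mul (continuous_apply y))
    ((continuous_apply (A.piecewise x y)).mul (continuous_apply (A.piecewise y x)))

end SplitRankOne

theorem isClosed_sum_of_subset_nonneg {X ι : Type*} [Countable X] [Fintype ι]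
    {S : ι → Set (X → ℝ)} (hS : ∀ i, IsClosed (S i)) (hS0 : ∀ i, S i ⊆ Set.Ici 0) :
    IsClosed (∑ i, S i) := by
  refine IsSeqClosed.isClosed fun F F' hF hFF' => ?_
  choose p hpS hpF using fun j => (Set.mem_fintype_sum S (F j)).1 (hF j)
  choose C hC using fun x => (tendsto_pi_nhds.1 hFF' x).bddAbove_range
  have hpK : ∀ j, p j ∈ Set.univ.pi fun _ : ι => Set.univ.pi fun x => Set.Icc 0 (C x) := by
    intro j i _ x _
    refine ⟨hS0 i (hpS j i) x, le_trans ?_ (hC x (Set.mem_range_self j))⟩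
    rw [← hpF j, Finset.sum_apply]
    exact Finset.single_le_sum (fun i _ => hS0 i (hpS j i) x) (Finset.mem_univ i)
  obtain ⟨q, -, ψ, hψ, hpq⟩ :=
    (isCompact_univ_pi fun _ => isCompact_univ_pi fun x => isCompact_Icc).tendsto_subseq hpK
  refine (Set.mem_fintype_sum S F').2
    ⟨q, fun i => (hS i).mem_of_tendsto (tendsto_pi_nhds.1 hpq i) (.of_forall fun j => hpS _ i), ?_⟩
  refine tendsto_nhds_unique (f := fun j => F (ψ j)) ?_ (hFF'.comp hψ.tendsto_atTop)
  exact (tendsto_finsetSum _ fun i _ => tendsto_pi_nhds.1 hpq i).congr fun j => hpF (ψ j)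

section Decomposition

variable {n : ℕ}

def IsBalancedSplit (A : Finset (Fin n)) : Prop :=
  ((n : ℝ) / 3 ≤ (A.card : ℝ) ∧ (A.card : ℝ) ≤ 2 * (n : ℝ) / 3) ∧
    ((n : ℝ) / 3 ≤ (Aᶜ.card : ℝ) ∧ (Aᶜ.card : ℝ) ≤ 2 * (n : ℝ) / 3)

theorem setOf_hasGoodDecomp_eq (k : ℕ) :
    {F | HasGoodDecomp n k F} = ⋃ (c : Σ m : Fin (k + 1), Fin m → Finset (Fin n))
      (_ : ∀ i, IsBalancedSplit (c.2 i)), ∑ i, {p | 0 ≤ p ∧ IsSplitRankOne (c.2 i) p} := by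
  ext F
  simp only [Set.mem_ofPred_eq, Set.mem_iUnion, exists_prop]
  constructor
  · rintro ⟨m, hm, A, g, h, hA, hAc, hg, hh, hgA, hhA, hF⟩
    refine ⟨⟨⟨m, Nat.lt_succ_of_le hm⟩, A⟩, fun i => ⟨hA i, hAc i⟩,
      (Set.mem_fintype_sum _ _).2 ⟨fun i => g i * h i,
        fun i => ⟨fun x => mul_nonneg (hg i x) (hh i x),
          isSplitRankOne_mul (fun x y => hgA i x y) (fun x y => hhA i x y)⟩, ?_⟩⟩
    ext x
    simp [hF]
  · rintro ⟨⟨⟨m, hm⟩, A⟩, hA, hF⟩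
    obtain ⟨p, hp, rfl⟩ := (Set.mem_fintype_sum _ _).1 hF
    choose g h hg hh hgA hhA hgh using fun i => (hp i).2.exists_dependsOn_mul (hp i).1
    exact ⟨m, Nat.lt_succ_iff.1 hm, A, g, h, fun i => (hA i).1, fun i => (hA i).2,
      fun i => hg i, fun i => hh i, fun i x y => @hgA i x y, fun i x y => @hhA i x y,
      fun x => by simp [hgh]⟩

theorem isClosed_setOf_hasGoodDecomp (k : ℕ) : IsClosed {F | HasGoodDecomp n k F} := by
  rw [setOf_hasGoodDecomp_eq]
  exact isClosed_iUnion_of_finite fun c => isClosed_iUnion_of_finite fun _ =>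
    isClosed_sum_of_subset_nonneg (fun i => isClosed_Ici.inter (isClosed_setOf_isSplitRankOne _))
      fun i _ hp => hp.1

end Decomposition

/-- A pointwise limit of functions on `{0,1}ⁿ`, each expressible as a sum of at most `k`
products of nonnegative functions on complementary coordinate subsets of sizes between `n/3`
and `2n/3` (the subsets may vary along the sequence), is itself expressible in the same form. -/
theorem stmt_18 {n k : ℕ} (Fseq : ℕ → (Fin n → Bool) → ℝ) (F : (Fin n → Bool) → ℝ)
    (hdecomp : ∀ j, HasGoodDecomp n k (Fseq j))
    (hlim : ∀ x, Filter.Tendsto (fun j => Fseq j x) Filter.atTop (nhds (F x))) :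
    HasGoodDecomp n k F :=
  (isClosed_setOf_hasGoodDecomp k).mem_of_tendsto (tendsto_pi_nhds.2 hlim) (.of_forall hdecomp)
end
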